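/- Let F : ℝ^d → ℝ be ℓ-weakly convex with ℓ > 0 and (μ_c, μ_H)-hidden strongly convex on X with μ_H > 0, and let x* ∈ X be the (unique) minimizer of F over X. Let x be a square-integrable random vector taking values in X, let x̂ := prox_{Φ/2ℓ}(x) with Φ := F + δ_X, and suppose that for some ε ≥ 0, E[F(x̂) − F(x*) + ℓ‖x̂ − x‖²] ≤ ε. Then E‖x − x*‖² ≤ (4/(μ_H μ_c²) + 2/ℓ) ε. -/

import Mathlib

open MeasureTheory
open scoped RealInnerProductSpace

noncomputable section

/-- `F` is hidden convex on `X` with moduli `μc > 0` and `μH ≥ 0`, witnessed by the convex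
set `U`, the bijection `c : X → U` satisfying `‖c x - c y‖ ≥ μc * ‖x - y‖`, and the
(`μH`-strongly) convex function `H : U → ℝ` with `F = H ∘ c` on `X`, where `H` attains its
minimum over `U` at `ustar`. -/
def HiddenConvex {d : ℕ} (μc μH : ℝ) (X U : Set (EuclideanSpace ℝ (Fin d)))
    (c : EuclideanSpace ℝ (Fin d) → EuclideanSpace ℝ (Fin d)) (H F : EuclideanSpace ℝ (Fin d) → ℝ) (ustar : EuclideanSpace ℝ (Fin d)) : Prop :=
  Convex ℝ U ∧ Set.BijOn c X U ∧
    (∀ x ∈ X, ∀ y ∈ X, μc * ‖x - y‖ ≤ ‖c x - c y‖) ∧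
    (∀ x ∈ X, F x = H (c x)) ∧
    (∀ u ∈ U, ∀ v ∈ U, ∀ t ∈ Set.Icc (0 : ℝ) 1,
      H ((1 - t) • u + t • v) ≤
        (1 - t) * H u + t * H v - (1 - t) * t * μH / 2 * ‖u - v‖ ^ 2) ∧
    ustar ∈ U ∧ ∀ u ∈ U, H ustar ≤ H u

/-- `F` is `ℓ`-weakly convex: `x ↦ F x + ℓ/2 ‖x‖²` is convex on `ℝ^d`. -/
def WeaklyConvex {d : ℕ} (ℓ : ℝ) (F : EuclideanSpace ℝ (Fin d) → ℝ) : Prop :=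
  ConvexOn ℝ Set.univ fun x => F x + ℓ / 2 * ‖x‖ ^ 2

/-- `q = prox_{Φ/ρ}(p)`, i.e. `q` minimizes `y ↦ F y + ρ/2 ‖y - p‖²` over `X`. -/
def IsProx {d : ℕ} (X : Set (EuclideanSpace ℝ (Fin d))) (F : EuclideanSpace ℝ (Fin d) → ℝ) (ρ : ℝ) (p q : EuclideanSpace ℝ (Fin d)) : Prop :=
  q ∈ X ∧ ∀ y ∈ X, F q + ρ / 2 * ‖q - p‖ ^ 2 ≤ F y + ρ / 2 * ‖y - p‖ ^ 2

/-!
The gap `F(x̂) - F(x*) + ℓ‖x̂ - x‖²` controls both terms of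
`‖x - x*‖² ≤ 2‖x - x̂‖² + 2‖x̂ - x*‖²`: the first directly, the second through the quadratic
growth `μH μc² / 2 ‖y - x*‖² ≤ F y - F x*` that hidden strong convexity transfers from `H` to `F`.
Integrating this pointwise bound needs the gap to be integrable; it equals the Moreau envelope
at `x` minus `F x*`, and the envelope minus `ℓ‖·‖²` is an infimum of affine functions, hence
concave and therefore continuous.
-/

open Set Filter Topology

theorem concaveOn_ciInf {E ι : Type*} [AddCommGroup E] [Module ℝ E] [Nonempty ι] {s : Set E}
    {f : ι → E → ℝ} (hf : ∀ i, ConcaveOn ℝ s (f i))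
    (hbdd : ∀ x ∈ s, BddBelow (range fun i => f i x)) :
    ConcaveOn ℝ s fun x => ⨅ i, f i x := by
  refine ⟨(hf (Classical.arbitrary ι)).1, fun x hx y hy a b ha hb hab => le_ciInf fun i => ?_⟩
  dsimp only
  calc a • (⨅ i, f i x) + b • ⨅ i, f i y ≤ a • f i x + b • f i y := by
        simp only [smul_eq_mul]
        gcongr
        exacts [ciInf_le (hbdd x hx) i, ciInf_le (hbdd y hy) i]
    _ ≤ f i (a • x + b • y) := (hf i).2 hx hy ha hb hab

theorem StrongConvexOn.quadratic_growth {E : Type*} [NormedAddCommGroup E] [NormedSpace ℝ E]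
    {s : Set E} {m : ℝ} {f : E → ℝ} {x₀ x : E} (hf : StrongConvexOn s m f) (hx₀ : x₀ ∈ s)
    (hmin : IsMinOn f s x₀) (hx : x ∈ s) :
    m / 2 * ‖x - x₀‖ ^ 2 ≤ f x - f x₀ := by
  have hlim : Tendsto (fun t : ℝ => t * (m / 2 * ‖x - x₀‖ ^ 2)) (𝓝[<] 1)
      (𝓝 (m / 2 * ‖x - x₀‖ ^ 2)) :=
    ((continuous_mul_const _).tendsto' 1 _ (one_mul _)).mono_left nhdsWithin_le_nhds
  refine le_of_tendsto hlim (eventually_of_mem (Ioo_mem_nhdsLT one_pos) fun t ht => ?_)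
  have hconv := hf.2 hx hx₀ (sub_nonneg.2 ht.2.le) ht.1.le (sub_add_cancel 1 t)
  have hle := isMinOn_iff.1 hmin _
    (hf.1 hx hx₀ (sub_nonneg.2 ht.2.le) ht.1.le (sub_add_cancel 1 t))
  simp only [smul_eq_mul] at hconv
  have hscaled : (1 - t) * (t * (m / 2 * ‖x - x₀‖ ^ 2)) ≤ (1 - t) * (f x - f x₀) := by
    linarith
  exact le_of_mul_le_mul_left hscaled (sub_pos.2 ht.2)

theorem sq_norm_sub_le_of_quadratic_growth {E : Type*} [SeminormedAddCommGroup E]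
    {m ℓ δ : ℝ} {a b c : E} (hm : 0 < m) (hℓ : 0 < ℓ) (hgrowth : m / 2 * ‖b - c‖ ^ 2 ≤ δ) :
    ‖a - c‖ ^ 2 ≤ (4 / m + 2 / ℓ) * (δ + ℓ * ‖b - a‖ ^ 2) := by
  have htri : ‖a - c‖ ^ 2 ≤ 2 * ‖b - a‖ ^ 2 + 2 * ‖b - c‖ ^ 2 := by
    have h := norm_sub_le_norm_sub_add_norm_sub a b c
    rw [norm_sub_rev a b] at h
    nlinarith [sq_nonneg (‖b - a‖ - ‖b - c‖), norm_nonneg (a - c)]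
  have hδ : 0 ≤ δ := le_trans (by positivity) hgrowth
  have hfirst : 2 * ‖b - a‖ ^ 2 = 2 / ℓ * (ℓ * ‖b - a‖ ^ 2) := by field_simp
  have hsecond : 2 * ‖b - c‖ ^ 2 ≤ 4 / m * δ := by
    rw [div_mul_eq_mul_div, le_div_iff₀ hm]
    linarith
  have hcross : 0 ≤ 4 / m * (ℓ * ‖b - a‖ ^ 2) + 2 / ℓ * δ := by positivity
  linarith

section MoreauEnvelope

variable {E : Type*} [NormedAddCommGroup E] [InnerProductSpace ℝ E] {X : Set E} {F : E → ℝ}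
  {ρ : ℝ}

-- `Φ_{1/ρ}` for `Φ = F + δ_X`; the infimum is the junk value `0` when it is not bounded below.
def moreauEnvelope (X : Set E) (F : E → ℝ) (ρ : ℝ) (p : E) : ℝ :=
  ⨅ y : X, F y + ρ / 2 * ‖(y : E) - p‖ ^ 2

theorem concaveOn_moreauEnvelope_sub (hX : X.Nonempty) (hF : BddBelow (F '' X)) (hρ : 0 ≤ ρ) :
    ConcaveOn ℝ univ fun p => moreauEnvelope X F ρ p - ρ / 2 * ‖p‖ ^ 2 := by
  have : Nonempty X := hX.to_subtype
  obtain ⟨m, hm⟩ := hF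
  have hFm : ∀ y : X, m ≤ F y := fun y => hm (mem_image_of_mem F y.2)
  have hbdd : ∀ p, BddBelow (range fun y : X => F y + ρ / 2 * ‖(y : E) - p‖ ^ 2) :=
    fun p => ⟨m, by rintro _ ⟨y, rfl⟩; nlinarith [hFm y, sq_nonneg ‖(y : E) - p‖]⟩
  have hinf : (fun p => moreauEnvelope X F ρ p - ρ / 2 * ‖p‖ ^ 2) =
      fun p => ⨅ y : X, (F y + ρ / 2 * ‖(y : E) - p‖ ^ 2 - ρ / 2 * ‖p‖ ^ 2) :=
    funext fun p => ciInf_sub (hbdd p) _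
  rw [hinf]
  refine concaveOn_ciInf (fun y => ?_) fun p _ => ⟨m - ρ / 2 * ‖p‖ ^ 2, ?_⟩
  · have haffine : (fun p => F y + ρ / 2 * ‖(y : E) - p‖ ^ 2 - ρ / 2 * ‖p‖ ^ 2) =
        (fun _ => F y + ρ / 2 * ‖(y : E)‖ ^ 2) - ⇑(innerₛₗ ℝ (ρ • (y : E))) := by
      ext p
      simp only [Pi.sub_apply, innerₛₗ_apply_apply, real_inner_smul_left, norm_sub_sq_real]
      ring
    rw [haffine]
    exact (concaveOn_const _ convex_univ).sub ((innerₛₗ ℝ (ρ • (y : E))).convexOn convex_univ)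
  · rintro _ ⟨y, rfl⟩
    nlinarith [hFm y, sq_nonneg ‖(y : E) - p‖]

theorem continuous_moreauEnvelope [FiniteDimensional ℝ E] (hX : X.Nonempty)
    (hF : BddBelow (F '' X)) (hρ : 0 ≤ ρ) : Continuous (moreauEnvelope X F ρ) := by
  have hcont := continuousOn_univ.1
    ((concaveOn_moreauEnvelope_sub hX hF hρ).continuousOn isOpen_univ)
  have hsq : Continuous fun p : E => ρ / 2 * ‖p‖ ^ 2 := by fun_prop
  exact (hcont.add hsq).congr fun p => sub_add_cancel _ _

end MoreauEnvelope

section Euclidean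

variable {d : ℕ} {X U : Set (EuclideanSpace ℝ (Fin d))} {F H : EuclideanSpace ℝ (Fin d) → ℝ}
  {c : EuclideanSpace ℝ (Fin d) → EuclideanSpace ℝ (Fin d)} {μc μH ρ : ℝ}
  {ustar xstar : EuclideanSpace ℝ (Fin d)}

theorem IsProx.moreauEnvelope_eq {p q : EuclideanSpace ℝ (Fin d)} (h : IsProx X F ρ p q) :
    moreauEnvelope X F ρ p = F q + ρ / 2 * ‖q - p‖ ^ 2 := by
  have : Nonempty X := ⟨⟨q, h.1⟩⟩
  exact IsGLB.ciInf_eq (IsLeast.isGLB ⟨⟨⟨q, h.1⟩, rfl⟩, by rintro _ ⟨y, rfl⟩; exact h.2 y y.2⟩)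

theorem HiddenConvex.strongConvexOn (hHC : HiddenConvex μc μH X U c H F ustar) :
    StrongConvexOn U μH H := by
  obtain ⟨hU, -, -, -, hH, -, -⟩ := hHC
  refine ⟨hU, fun u hu v hv a b ha hb hab => ?_⟩
  obtain rfl : a = 1 - b := by linarith
  have h := hH u hu v hv b ⟨hb, by linarith⟩
  simp only [smul_eq_mul]
  linarith

theorem HiddenConvex.isMinOn (hHC : HiddenConvex μc μH X U c H F (c xstar))
    (hxstar : xstar ∈ X) : IsMinOn F X xstar := by
  obtain ⟨-, hbij, -, hFH, -, -, hmin⟩ := hHC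
  refine isMinOn_iff.2 fun y hy => ?_
  rw [hFH y hy, hFH xstar hxstar]
  exact hmin _ (hbij.mapsTo hy)

theorem HiddenConvex.quadratic_growth (hHC : HiddenConvex μc μH X U c H F (c xstar))
    (hμc : 0 ≤ μc) (hμH : 0 ≤ μH) (hxstar : xstar ∈ X) {y : EuclideanSpace ℝ (Fin d)}
    (hy : y ∈ X) : μH * μc ^ 2 / 2 * ‖y - xstar‖ ^ 2 ≤ F y - F xstar := by
  have hH := hHC.strongConvexOn
  obtain ⟨-, hbij, hc, hFH, -, hustar, hmin⟩ := hHC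
  calc μH * μc ^ 2 / 2 * ‖y - xstar‖ ^ 2 = μH / 2 * (μc * ‖y - xstar‖) ^ 2 := by ring
    _ ≤ μH / 2 * ‖c y - c xstar‖ ^ 2 := by gcongr; exact hc y hy xstar hxstar
    _ ≤ H (c y) - H (c xstar) :=
      hH.quadratic_growth hustar (isMinOn_iff.2 hmin) (hbij.mapsTo hy)
    _ = F y - F xstar := by rw [hFH y hy, hFH xstar hxstar]

theorem integrable_prox_gap {Ω : Type*} [MeasurableSpace Ω] {μ : Measure Ω} [IsFiniteMeasure μ]
    {x xhat : Ω → EuclideanSpace ℝ (Fin d)} (hρ : 0 ≤ ρ) (hxstar : xstar ∈ X)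
    (hmin : IsMinOn F X xstar) (hx : MemLp x 2 μ) (hprox : ∀ ω, IsProx X F ρ (x ω) (xhat ω)) :
    Integrable (fun ω => F (xhat ω) - F xstar + ρ / 2 * ‖xhat ω - x ω‖ ^ 2) μ := by
  have hgap : (fun ω => F (xhat ω) - F xstar + ρ / 2 * ‖xhat ω - x ω‖ ^ 2) =
      fun ω => moreauEnvelope X F ρ (x ω) - F xstar :=
    funext fun ω => by rw [(hprox ω).moreauEnvelope_eq]; ring
  have hxsub : MemLp (fun ω => x ω - xstar) 2 μ := hx.sub (memLp_const xstar)
  have hdom : Integrable (fun ω => ρ / 2 * ‖x ω - xstar‖ ^ 2) μ :=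
    ((memLp_two_iff_integrable_sq_norm hxsub.1).1 hxsub).const_mul _
  refine hdom.mono' ?_ (ae_of_all _ fun ω => ?_)
  · rw [hgap]
    exact ((continuous_moreauEnvelope ⟨xstar, hxstar⟩ hmin.bddBelow hρ).comp_aestronglyMeasurable
      hx.1).sub aestronglyMeasurable_const
  · have hlower : F xstar ≤ F (xhat ω) := isMinOn_iff.1 hmin _ (hprox ω).1
    have hupper := (hprox ω).2 xstar hxstar
    rw [norm_sub_rev xstar] at hupper
    rw [Real.norm_eq_abs, abs_of_nonneg (by positivity)]
    linarith

end Euclidean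

theorem sgm_iterate_convergence_general {d : ℕ}
    {Ω : Type} [MeasurableSpace Ω] (μ : Measure Ω) [IsProbabilityMeasure μ]
    (X U : Set (EuclideanSpace ℝ (Fin d)))
    (F H : EuclideanSpace ℝ (Fin d) → ℝ) (c : EuclideanSpace ℝ (Fin d) → EuclideanSpace ℝ (Fin d)) (μc μH ℓ : ℝ)
    (hμc : 0 < μc) (hμH : 0 < μH) (hℓ : 0 < ℓ) (ustar xstar : EuclideanSpace ℝ (Fin d))
    (hHC : HiddenConvex μc μH X U c H F ustar)
    (hxstar : xstar ∈ X) (hcxstar : c xstar = ustar)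
    (x xhat : Ω → EuclideanSpace ℝ (Fin d)) (hx2 : MemLp x 2 μ)
    (hprox : ∀ ω, IsProx X F (2 * ℓ) (x ω) (xhat ω))
    (ε : ℝ)
    (hgap : (∫ ω, (F (xhat ω) - F xstar + ℓ * ‖xhat ω - x ω‖ ^ 2) ∂μ) ≤ ε) :
    (∫ ω, ‖x ω - xstar‖ ^ 2 ∂μ) ≤ (4 / (μH * μc ^ 2) + 2 / ℓ) * ε := by
  subst hcxstar
  set C := 4 / (μH * μc ^ 2) + 2 / ℓ
  have hpointwise : ∀ ω, ‖x ω - xstar‖ ^ 2 ≤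
      C * (F (xhat ω) - F xstar + ℓ * ‖xhat ω - x ω‖ ^ 2) := fun ω =>
    sq_norm_sub_le_of_quadratic_growth (by positivity) hℓ
      (hHC.quadratic_growth hμc.le hμH.le hxstar (hprox ω).1)
  have hint := integrable_prox_gap (by positivity) hxstar (hHC.isMinOn hxstar) hx2 hprox
  rw [mul_div_cancel_left₀ ℓ two_ne_zero] at hint
  calc ∫ ω, ‖x ω - xstar‖ ^ 2 ∂μ
      ≤ ∫ ω, C * (F (xhat ω) - F xstar + ℓ * ‖xhat ω - x ω‖ ^ 2) ∂μ :=
        integral_mono_of_nonneg (ae_of_all _ fun _ => by positivity) (hint.const_mul C)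
          (ae_of_all _ hpointwise)
    _ = C * ∫ ω, (F (xhat ω) - F xstar + ℓ * ‖xhat ω - x ω‖ ^ 2) ∂μ := integral_const_mul C _
    _ ≤ C * ε := by gcongr

/-- Corollary 4.6: under hidden strong convexity, closeness of the Moreau-envelope gap to
zero yields convergence of the iterate to the unique minimizer. -/
theorem sgm_iterate_convergence {d : ℕ}
    {Ω : Type} [MeasurableSpace Ω] (μ : Measure Ω) [IsProbabilityMeasure μ]
    (X U : Set (EuclideanSpace ℝ (Fin d))) (hXne : X.Nonempty) (hXcl : IsClosed X) (hXcvx : Convex ℝ X)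
    (F H : EuclideanSpace ℝ (Fin d) → ℝ) (c : EuclideanSpace ℝ (Fin d) → EuclideanSpace ℝ (Fin d)) (μc μH ℓ : ℝ)
    (hμc : 0 < μc) (hμH : 0 < μH) (hℓ : 0 < ℓ) (ustar xstar : EuclideanSpace ℝ (Fin d))
    (hHC : HiddenConvex μc μH X U c H F ustar)
    (hWC : WeaklyConvex ℓ F)
    (hxstar : xstar ∈ X) (hcxstar : c xstar = ustar)
    (x xhat : Ω → EuclideanSpace ℝ (Fin d)) (hxX : ∀ ω, x ω ∈ X) (hx2 : MemLp x 2 μ)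
    (hprox : ∀ ω, IsProx X F (2 * ℓ) (x ω) (xhat ω))
    (ε : ℝ) (hε : 0 ≤ ε)
    (hgap : (∫ ω, (F (xhat ω) - F xstar + ℓ * ‖xhat ω - x ω‖ ^ 2) ∂μ) ≤ ε) :
    (∫ ω, ‖x ω - xstar‖ ^ 2 ∂μ) ≤ (4 / (μH * μc ^ 2) + 2 / ℓ) * ε :=
  sgm_iterate_convergence_general μ X U F H c μc μH ℓ hμc hμH hℓ ustar xstar hHC hxstar hcxstar x
    xhat hx2 hprox ε hgap
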